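/- With G(D,α,β) = Γ(D/2−α)Γ(D/2−β)Γ(α+β−D/2)/(Γ(α)Γ(β)Γ(D−α−β)) and D = 4−2ε, the quantity (2/(D−4))·[G(D,1,1)G(D,1,2) − G(D,1,1)G(D,2,3−D/2)] equals (Γ(1+2ε)/(ε³(1−2ε)))·[Γ⁴(1−ε)Γ²(1+ε)/(Γ²(1−2ε)Γ(1+2ε)) − Γ³(1−ε)/Γ(1−3ε)], for real ε with 0 < ε < 1/4. -/
import Mathlib


/-- The one-loop massless propagator coefficient function (real version). -/
noncomputable def Gfun (D α β : ℝ) : ℝ :=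
  Real.Gamma (D / 2 - α) * Real.Gamma (D / 2 - β) * Real.Gamma (α + β - D / 2)
    / (Real.Gamma α * Real.Gamma β * Real.Gamma (D - α - β))

/-- With D = 4−2ε and 0 < ε < 1/4,
    (2/(D−4))·[G(D,1,1)G(D,1,2) − G(D,1,1)G(D,2,3−D/2)]
    = (Γ(1+2ε)/(ε³(1−2ε)))·[Γ⁴(1−ε)Γ²(1+ε)/(Γ²(1−2ε)Γ(1+2ε)) − Γ³(1−ε)/Γ(1−3ε)]. -/
theorem two_loop_master_value (ε : ℝ) (h0 : 0 < ε) (h1 : ε < 1 / 4) (D : ℝ)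
    (hD : D = 4 - 2 * ε) :
    (2 / (D - 4)) * (Gfun D 1 1 * Gfun D 1 2 - Gfun D 1 1 * Gfun D 2 (3 - D / 2))
      = (Real.Gamma (1 + 2 * ε) / (ε ^ 3 * (1 - 2 * ε)))
          * (Real.Gamma (1 - ε) ^ 4 * Real.Gamma (1 + ε) ^ 2
                / (Real.Gamma (1 - 2 * ε) ^ 2 * Real.Gamma (1 + 2 * ε))
              - Real.Gamma (1 - ε) ^ 3 / Real.Gamma (1 - 3 * ε)) := by
  subst hD
  have hε : ε ≠ 0 := h0.ne'
  have g1 : Real.Gamma 1 = 1 := Real.Gamma_one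
  have g2 : Real.Gamma 2 = 1 := Real.Gamma_two
  have hge : Real.Gamma ε = Real.Gamma (1 + ε) / ε := by
    rw [show (1 + ε : ℝ) = ε + 1 by ring, Real.Gamma_add_one hε]
    field_simp
  have hgm : Real.Gamma (-ε) = Real.Gamma (1 - ε) / (-ε) := by
    rw [show (1 - ε : ℝ) = -ε + 1 by ring, Real.Gamma_add_one (neg_ne_zero.2 hε)]
    field_simp
  have hg2e : Real.Gamma (2 - 2 * ε) = (1 - 2 * ε) * Real.Gamma (1 - 2 * ε) := by
    rw [show (2 - 2 * ε : ℝ) = (1 - 2 * ε) + 1 by ring,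
      Real.Gamma_add_one (by nlinarith)]
  have p1 : 0 < Real.Gamma (1 - ε) := Real.Gamma_pos_of_pos (by linarith)
  have p2 : 0 < Real.Gamma (1 + ε) := Real.Gamma_pos_of_pos (by linarith)
  have p3 : 0 < Real.Gamma (1 - 2 * ε) := Real.Gamma_pos_of_pos (by linarith)
  have p4 : 0 < Real.Gamma (1 + 2 * ε) := Real.Gamma_pos_of_pos (by linarith)
  have p5 : 0 < Real.Gamma (1 - 3 * ε) := Real.Gamma_pos_of_pos (by linarith)
  simp only [Gfun]
  rw [show ((4 - 2 * ε) / 2 - 1 : ℝ) = 1 - ε by ring,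
      show ((1 : ℝ) + 1 - (4 - 2 * ε) / 2) = ε by ring,
      show ((4 - 2 * ε) - 1 - 1 : ℝ) = 2 - 2 * ε by ring,
      show ((4 - 2 * ε) / 2 - 2 : ℝ) = -ε by ring,
      show ((1 : ℝ) + 2 - (4 - 2 * ε) / 2) = 1 + ε by ring,
      show ((4 - 2 * ε) - 1 - 2 : ℝ) = 1 - 2 * ε by ring,
      show ((4 - 2 * ε) / 2 - (3 - (4 - 2 * ε) / 2) : ℝ) = 1 - 2 * ε by ring,
      show ((2 : ℝ) + (3 - (4 - 2 * ε) / 2) - (4 - 2 * ε) / 2) = 1 + 2 * ε by ring,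
      show ((4 - 2 * ε) - 2 - (3 - (4 - 2 * ε) / 2) : ℝ) = 1 - 3 * ε by ring,
      show ((3 : ℝ) - (4 - 2 * ε) / 2) = 1 + ε by ring]
  rw [g1, g2, hge, hgm, hg2e]
  have h12 : (1 : ℝ) - 2 * ε ≠ 0 := by nlinarith
  field_simp
  ring
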